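/- The real 3×3 matrix M with rows ( −√((5−√17)/2), −√((−5+3√17)/16), −√((−19+5√17)/16) ), ( 0, −√(7−√17)/4, √(9+√17)/4 ), ( −√((−3+√17)/2), (1/2)·√((7−√17)/2), (−3+√17)/4 ) is orthogonal, i.e. Mᵀ·M is the identity matrix. (This is the block of the vertical gauge transformation between the connections ραk and αραk for AH+1 with columns e·d·d·C, e·ẽ·e·C, e·b̃·b·C, from Appendix A of the paper.) -/
import Mathlib


open Matrix

/-- The block of the vertical gauge transformation between ραk and αραk for AH+1 with columns
e·d·d·C, e·ẽ·e·C, e·b̃·b·C. -/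
noncomputable def M : Matrix (Fin 3) (Fin 3) ℝ :=
  !![-(Real.sqrt ((5 - Real.sqrt 17) / 2)), -(Real.sqrt ((-5 + 3 * Real.sqrt 17) / 16)),
       -(Real.sqrt ((-19 + 5 * Real.sqrt 17) / 16));
     0, -(Real.sqrt (7 - Real.sqrt 17)) / 4, Real.sqrt (9 + Real.sqrt 17) / 4;
     -(Real.sqrt ((-3 + Real.sqrt 17) / 2)), (1 / 2) * Real.sqrt ((7 - Real.sqrt 17) / 2),
       (-3 + Real.sqrt 17) / 4]

section Aux

private lemma h17' : Real.sqrt 17 ^ 2 = 17 := Real.sq_sqrt (by norm_num)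

private lemma h4' : (4:ℝ) < Real.sqrt 17 := by
  nlinarith [h17', Real.sqrt_nonneg 17]

private lemma h5' : Real.sqrt 17 < 5 := by
  nlinarith [h17', Real.sqrt_nonneg 17]

private lemma n1' : (0:ℝ) ≤ (5 - Real.sqrt 17) / 2 := by linarith [h5']
private lemma n2' : (0:ℝ) ≤ (-5 + 3 * Real.sqrt 17) / 16 := by linarith [h4']
private lemma n3' : (0:ℝ) ≤ (-19 + 5 * Real.sqrt 17) / 16 := by linarith [h4']
private lemma n4' : (0:ℝ) ≤ 7 - Real.sqrt 17 := by linarith [h5']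
private lemma n5' : (0:ℝ) ≤ 9 + Real.sqrt 17 := by linarith [h4']
private lemma n6' : (0:ℝ) ≤ (-3 + Real.sqrt 17) / 2 := by linarith [h4']
private lemma n7' : (0:ℝ) ≤ (7 - Real.sqrt 17) / 2 := by linarith [h5']

private lemma hA' : (0:ℝ) ≤ (350 - 82 * Real.sqrt 17) / 256 := by
  nlinarith [h17', Real.sqrt_nonneg 17]
private lemma hB' : (0:ℝ) ≤ (568 - 136 * Real.sqrt 17) / 256 := by
  nlinarith [h17', Real.sqrt_nonneg 17]
private lemma h109' : (109:ℝ) ≤ 27 * Real.sqrt 17 := by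
  nlinarith [h17', Real.sqrt_nonneg 17]

private lemma a1' : Real.sqrt ((5 - Real.sqrt 17) / 2) * Real.sqrt ((-5 + 3 * Real.sqrt 17) / 16)
    = Real.sqrt ((-19 + 5 * Real.sqrt 17) / 8) := by
  rw [← Real.sqrt_mul n1']; congr 1; linear_combination (-3/32 : ℝ) * h17'

private lemma a2' : Real.sqrt ((-3 + Real.sqrt 17) / 2) * Real.sqrt ((7 - Real.sqrt 17) / 2)
    = 2 * Real.sqrt ((-19 + 5 * Real.sqrt 17) / 8) := by
  rw [← Real.sqrt_mul n6',
    show (-3 + Real.sqrt 17) / 2 * ((7 - Real.sqrt 17) / 2)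
      = 2 ^ 2 * ((-19 + 5 * Real.sqrt 17) / 8) by linear_combination (-1/4 : ℝ) * h17',
    Real.sqrt_mul (by norm_num : (0:ℝ) ≤ 2 ^ 2), Real.sqrt_sq (by norm_num : (0:ℝ) ≤ 2)]

private lemma b1' : Real.sqrt ((5 - Real.sqrt 17) / 2) * Real.sqrt ((-19 + 5 * Real.sqrt 17) / 16)
    = Real.sqrt ((-45 + 11 * Real.sqrt 17) / 8) := by
  rw [← Real.sqrt_mul n1']; congr 1; linear_combination (-5/32 : ℝ) * h17'

private lemma b2' : Real.sqrt ((-3 + Real.sqrt 17) / 2) * ((-3 + Real.sqrt 17) / 4)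
    = Real.sqrt ((-45 + 11 * Real.sqrt 17) / 8) := by
  rw [show ((-3 + Real.sqrt 17) / 4 : ℝ) = Real.sqrt (((-3 + Real.sqrt 17) / 4) ^ 2) from
      (Real.sqrt_sq (by linarith [h4'])).symm, ← Real.sqrt_mul n6']
  congr 1; linear_combination ((Real.sqrt 17 - 9) / 32 : ℝ) * h17'

private lemma m1' : Real.sqrt ((-5 + 3 * Real.sqrt 17) / 16)
      * Real.sqrt ((-19 + 5 * Real.sqrt 17) / 16)
    = Real.sqrt ((350 - 82 * Real.sqrt 17) / 256) := by
  rw [← Real.sqrt_mul n2']; congr 1; linear_combination (15/256 : ℝ) * h17'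

private lemma m2' : Real.sqrt (7 - Real.sqrt 17) * Real.sqrt (9 + Real.sqrt 17)
    = 16 * Real.sqrt ((46 - 2 * Real.sqrt 17) / 256) := by
  rw [← Real.sqrt_mul n4',
    show (7 - Real.sqrt 17) * (9 + Real.sqrt 17) = 16 ^ 2 * ((46 - 2 * Real.sqrt 17) / 256) by
      linear_combination (-1 : ℝ) * h17',
    Real.sqrt_mul (by norm_num : (0:ℝ) ≤ 16 ^ 2), Real.sqrt_sq (by norm_num : (0:ℝ) ≤ 16)]

private lemma m3' : (1/2 : ℝ) * Real.sqrt ((7 - Real.sqrt 17) / 2) * ((-3 + Real.sqrt 17) / 4)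
    = Real.sqrt ((568 - 136 * Real.sqrt 17) / 256) := by
  rw [show ((1:ℝ)/2) = Real.sqrt ((1/2) ^ 2) from (Real.sqrt_sq (by norm_num)).symm,
    show ((-3 + Real.sqrt 17) / 4 : ℝ) = Real.sqrt (((-3 + Real.sqrt 17) / 4) ^ 2) from
      (Real.sqrt_sq (by linarith [h4'])).symm,
    ← Real.sqrt_mul (by norm_num : (0:ℝ) ≤ (1/2) ^ 2),
    ← Real.sqrt_mul (mul_nonneg (by norm_num : (0:ℝ) ≤ (1/2) ^ 2) n7')]
  congr 1; linear_combination ((26 - 2 * Real.sqrt 17) / 256 : ℝ) * h17'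

private lemma hab' : Real.sqrt ((350 - 82 * Real.sqrt 17) / 256)
      * Real.sqrt ((568 - 136 * Real.sqrt 17) / 256)
    = (27 * Real.sqrt 17 - 109) / 64 := by
  rw [← Real.sqrt_mul hA',
    show (350 - 82 * Real.sqrt 17) / 256 * ((568 - 136 * Real.sqrt 17) / 256)
      = ((27 * Real.sqrt 17 - 109) / 64) ^ 2 by linear_combination (-1/128 : ℝ) * h17']
  exact Real.sqrt_sq (by linarith [h109'])

private lemma key' : Real.sqrt ((46 - 2 * Real.sqrt 17) / 256)
    = Real.sqrt ((350 - 82 * Real.sqrt 17) / 256)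
      + Real.sqrt ((568 - 136 * Real.sqrt 17) / 256) := by
  rw [show (46 - 2 * Real.sqrt 17) / 256
      = (Real.sqrt ((350 - 82 * Real.sqrt 17) / 256)
          + Real.sqrt ((568 - 136 * Real.sqrt 17) / 256)) ^ 2 by
    linear_combination (-1 : ℝ) * Real.sq_sqrt hA' - Real.sq_sqrt hB' - 2 * hab']
  exact Real.sqrt_sq (by positivity)

private lemma hMT' : Mᵀ = !![-(Real.sqrt ((5 - Real.sqrt 17) / 2)), 0,
       -(Real.sqrt ((-3 + Real.sqrt 17) / 2));
     -(Real.sqrt ((-5 + 3 * Real.sqrt 17) / 16)), -(Real.sqrt (7 - Real.sqrt 17)) / 4,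
       (1 / 2) * Real.sqrt ((7 - Real.sqrt 17) / 2);
     -(Real.sqrt ((-19 + 5 * Real.sqrt 17) / 16)), Real.sqrt (9 + Real.sqrt 17) / 4,
       (-3 + Real.sqrt 17) / 4] := by
  ext i j; fin_cases i <;> fin_cases j <;> rfl

end Aux

/-- This block of the vertical gauge transformation is orthogonal. -/
theorem stmt_15 : Mᵀ * M = (1 : Matrix (Fin 3) (Fin 3) ℝ) := by
  rw [hMT', show M = !![-(Real.sqrt ((5 - Real.sqrt 17) / 2)),
       -(Real.sqrt ((-5 + 3 * Real.sqrt 17) / 16)),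
       -(Real.sqrt ((-19 + 5 * Real.sqrt 17) / 16));
     0, -(Real.sqrt (7 - Real.sqrt 17)) / 4, Real.sqrt (9 + Real.sqrt 17) / 4;
     -(Real.sqrt ((-3 + Real.sqrt 17) / 2)), (1 / 2) * Real.sqrt ((7 - Real.sqrt 17) / 2),
       (-3 + Real.sqrt 17) / 4] from rfl, Matrix.mul_fin_three, Matrix.one_fin_three]
  ext i j
  fin_cases i <;> fin_cases j <;>
    simp [Matrix.vecHead, Matrix.vecTail, -Real.sqrt_div', -Real.sqrt_div, neg_mul, mul_neg, neg_neg]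
  · linear_combination Real.mul_self_sqrt n1' + Real.mul_self_sqrt n6'
  · linear_combination a1' - (1/2 : ℝ) * a2'
  · linear_combination b1' - b2'
  · linear_combination a1' - (1/2 : ℝ) * a2'
  · linear_combination Real.mul_self_sqrt n2' + (1/16 : ℝ) * Real.mul_self_sqrt n4'
      + (1/4 : ℝ) * Real.mul_self_sqrt n7'
  · linear_combination m1' + m3' - (1/16 : ℝ) * m2' - key'
  · linear_combination b1' - b2'
  · linear_combination m1' + m3' - (1/16 : ℝ) * m2' - key'
  · linear_combination Real.mul_self_sqrt n3' + (1/16 : ℝ) * Real.mul_self_sqrt n5'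
      + (1/16 : ℝ) * h17'
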